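/- arXiv:1902.09800 — 3 statements merged into one kernel-verified Lean document; each statement's English description precedes it below -/
import Mathlib

section
/- Let T > 0, let A : ℝ → ℍ^{n×n} be continuous with A(t+T) = A(t) for all t, and let M be a fundamental matrix of ẋ = A(t)x. Then M(t+T) = M(t)·M(0)⁻¹·M(T) for all t ∈ ℝ. -/
open Matrix Polynomial
open scoped Quaternion

noncomputable section

/-- The two complex components of a quaternion: `q = c1 q + (c2 q) * j`,
identifying `ℂ` with the real span of `1` and `i` in `ℍ`. -/
def Quaternion.c1 (q : ℍ[ℝ]) : ℂ := ⟨q.re, q.imI⟩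

def Quaternion.c2 (q : ℍ[ℝ]) : ℂ := ⟨q.imJ, q.imK⟩

/-- The embedding of `ℂ` into `ℍ` as the real span of `1` and `i`. -/
def Complex.toQuat (z : ℂ) : ℍ[ℝ] := ⟨z.re, z.im, 0, 0⟩

/-- The complex adjoint matrix `χ_A` of a quaternion matrix `A = A₁ + A₂·j`:
the block matrix `[[A₁, A₂], [-conj A₂, conj A₁]]`. -/
def chiMat {n : ℕ} (A : Matrix (Fin n) (Fin n) ℍ[ℝ]) :
    Matrix (Fin n ⊕ Fin n) (Fin n ⊕ Fin n) ℂ :=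
  Matrix.fromBlocks (A.map Quaternion.c1) (A.map Quaternion.c2)
    ((-(A.map Quaternion.c2)).map (starRingEnd ℂ)) ((A.map Quaternion.c1).map (starRingEnd ℂ))

/-- `ρ` is a standard eigenvalue of the quaternion matrix `A`: an eigenvalue of the
complex adjoint matrix `χ_A` with nonnegative imaginary part. -/
def IsStdEigenvalue {n : ℕ} (A : Matrix (Fin n) (Fin n) ℍ[ℝ]) (ρ : ℂ) : Prop :=
  (chiMat A).charpoly.IsRoot ρ ∧ 0 ≤ ρ.im

/-- `s` is the multiset of standard eigenvalues of `A` counted with multiplicity: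
it has `n` elements, all with nonnegative imaginary part, and the characteristic
polynomial of `χ_A` is `∏_{z ∈ s} (X - z)·(X - conj z)`. -/
def IsStdEigs {n : ℕ} (A : Matrix (Fin n) (Fin n) ℍ[ℝ]) (s : Multiset ℂ) : Prop :=
  Multiset.card s = n ∧ (∀ z ∈ s, 0 ≤ z.im) ∧
    (chiMat A).charpoly =
      (s.map (fun z => (X - C z) * (X - C (starRingEnd ℂ z)))).prod

/-- `x : ℝ → ℍ^n` is a solution of the linear quaternionic system `ẋ = A(t)x`. -/
def IsSol {n : ℕ} (A : ℝ → Matrix (Fin n) (Fin n) ℍ[ℝ]) (x : ℝ → Fin n → ℍ[ℝ]) : Prop :=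
  ∀ t : ℝ, HasDerivAt x ((A t).mulVec (x t)) t

/-- The norm `‖x‖ = Σ_k |x_k|` on `ℍ^n`. -/
def vecNorm {n : ℕ} (x : Fin n → ℍ[ℝ]) : ℝ := ∑ k, ‖x k‖

/-- The norm `‖A‖ = Σ_{i,j} |a_{ij}|` on `ℍ^{n×n}`. -/
def matNorm {n : ℕ} (A : Matrix (Fin n) (Fin n) ℍ[ℝ]) : ℝ := ∑ i, ∑ j, ‖A i j‖

/-- Stability (in the sense of Lyapunov) of the system `ẋ = A(t)x` at `t₀`. -/
def StableAt {n : ℕ} (A : ℝ → Matrix (Fin n) (Fin n) ℍ[ℝ]) (t₀ : ℝ) : Prop :=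
  ∀ ε > (0:ℝ), ∃ δ > (0:ℝ), ∀ x : ℝ → Fin n → ℍ[ℝ], IsSol A x →
    vecNorm (x t₀) < δ → ∀ t ≥ t₀, vecNorm (x t) < ε

/-- Asymptotic stability of the system `ẋ = A(t)x` at `t₀`. -/
def AsympStableAt {n : ℕ} (A : ℝ → Matrix (Fin n) (Fin n) ℍ[ℝ]) (t₀ : ℝ) : Prop :=
  StableAt A t₀ ∧ ∃ δ > (0:ℝ), ∀ x : ℝ → Fin n → ℍ[ℝ], IsSol A x →
    vecNorm (x t₀) < δ →
      Filter.Tendsto (fun t => vecNorm (x t)) Filter.atTop (nhds 0)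

/-- `M` is a fundamental matrix of `ẋ = A(t)x`: entrywise `M'(t) = A(t)·M(t)`
and `M(t)` is invertible for every `t`. -/
def IsFundamental {n : ℕ} (A M : ℝ → Matrix (Fin n) (Fin n) ℍ[ℝ]) : Prop :=
  (∀ (t : ℝ) (i j : Fin n), HasDerivAt (fun s => M s i j) ((A t * M t) i j) t) ∧
    ∀ t : ℝ, IsUnit (M t)

/-! If `m' = a m` with `m` invertible and `x' = a x`, then `(m⁻¹ x)' = -m⁻¹ m' m⁻¹ x + m⁻¹ a x = 0`,
so `m⁻¹ x` is constant. Both `t ↦ M (t + T)` and `M` solve `X' = A X` by periodicity of `A`, hence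
`M(t)⁻¹ M(t + T) = M(0)⁻¹ M(T)`. -/

section LinearODE

variable {R : Type*} [NormedRing R] [NormedAlgebra ℝ R] [HasSummableGeomSeries R]

theorem hasDerivAt_ringInverse_mul_of_linear {a m x : ℝ → R} {t : ℝ}
    (hm : HasDerivAt m (a t * m t) t) (hx : HasDerivAt x (a t * x t) t) (hmt : IsUnit (m t)) :
    HasDerivAt (fun s => Ring.inverse (m s) * x s) 0 t := by
  obtain ⟨u, hu⟩ := hmt
  have hinv : HasDerivAt (fun s => Ring.inverse (m s)) (-(↑u⁻¹ * a t)) t :=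
    ((hasFDerivAt_ringInverse u).comp_hasDerivAt_of_eq t hm hu).congr_deriv
      (by simp [← hu, mul_assoc])
  refine (hinv.mul hx).congr_deriv ?_
  simp [← hu, mul_assoc]

theorem eq_mul_ringInverse_mul_of_linear {a m x : ℝ → R}
    (hm : ∀ t, HasDerivAt m (a t * m t) t) (hx : ∀ t, HasDerivAt x (a t * x t) t)
    (hunit : ∀ t, IsUnit (m t)) (t s : ℝ) :
    x t = m t * Ring.inverse (m s) * x s := by
  have hderiv t := hasDerivAt_ringInverse_mul_of_linear (hm t) (hx t) (hunit t)
  have hconst := is_const_of_deriv_eq_zero (fun t => (hderiv t).differentiableAt)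
    (fun t => (hderiv t).deriv) t s
  rw [mul_assoc, ← hconst, ← mul_assoc, Ring.mul_inverse_cancel _ (hunit t), one_mul]

end LinearODE

-- A Banach algebra norm on matrices whose topology is, definitionally, the entrywise one.
attribute [local instance] Matrix.linftyOpNormedRing Matrix.linftyOpNormedAlgebra

theorem IsFundamental.hasDerivAt {n : ℕ} {A M : ℝ → Matrix (Fin n) (Fin n) ℍ[ℝ]}
    (hM : IsFundamental A M) (t : ℝ) : HasDerivAt M (A t * M t) t :=
  hasDerivAt_pi.2 fun i => hasDerivAt_pi.2 (hM.1 t i)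

theorem stmt8_general {n : ℕ} (T : ℝ) (A M : ℝ → Matrix (Fin n) (Fin n) ℍ[ℝ])
    (hAper : ∀ t, A (t + T) = A t) (hM : IsFundamental A M) :
    ∀ t : ℝ, M (t + T) = M t * Ring.inverse (M 0) * M T := by
  have hshift t : HasDerivAt (fun s => M (s + T)) (A t * M (t + T)) t := by
    have := (hM.hasDerivAt (t + T)).comp_add_const t T
    rwa [hAper] at this
  intro t
  simpa using eq_mul_ringInverse_mul_of_linear hM.hasDerivAt hshift hM.2 t 0

/-- for a `T`-periodic system, `M(t+T) = M(t)·M(0)⁻¹·M(T)`. -/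
theorem stmt8 {n : ℕ} (T : ℝ) (hT : 0 < T) (A M : ℝ → Matrix (Fin n) (Fin n) ℍ[ℝ])
    (hA : Continuous A) (hAper : ∀ t, A (t + T) = A t) (hM : IsFundamental A M) :
    ∀ t : ℝ, M (t + T) = M t * Ring.inverse (M 0) * M T :=
  stmt8_general T A M hAper hM
end
end

section
/- Let T > 0 and let B ∈ ℍ^{n×n} arise from a Floquet normal form M(t) = P(t)exp(tB) of a fundamental matrix of the T-periodic system ẋ = A(t)x, so that exp(TB) is a monodromy matrix. Then: (i) for every standard eigenvalue μ of B, at least one of e^{μT}, e^{conj(μ)T} is a standard eigenvalue of exp(TB); (ii) if μ ∈ ℂ and e^{μT} is a standard eigenvalue of exp(TB), then there exists a standard eigenvalue μ_k of B with e^{μT} ∈ {e^{μ_k T}, e^{conj(μ_k)T}} and Re(μ) = Re(μ_k). -/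
open Matrix Polynomial
open scoped Quaternion

noncomputable section

/-! The complex adjoint `A ↦ χ_A` is a continuous homomorphism of `ℝ`-algebras, hence
`χ_{exp(TB)} = exp(T χ_B)`. By the spectral mapping theorem for complex matrices the eigenvalues
of `χ_{exp(TB)}` are then exactly the numbers `e^{λT}` with `λ` an eigenvalue of `χ_B`. The entrywise
conjugate of `χ_A` is similar to `χ_A`, so the spectrum of `χ_A` is closed under conjugation and of
every eigenvalue `λ` of `χ_A`, `λ` or `conj λ` is a standard eigenvalue of `A`. Finally
`|e^{λT}| = e^{T Re λ}` recovers real parts, as `T ≠ 0`. -/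

open ComplexConjugate

namespace Quaternion

@[simp] lemma c1_re (q : ℍ[ℝ]) : (c1 q).re = q.re := rfl
@[simp] lemma c1_im (q : ℍ[ℝ]) : (c1 q).im = q.imI := rfl
@[simp] lemma c2_re (q : ℍ[ℝ]) : (c2 q).re = q.imJ := rfl
@[simp] lemma c2_im (q : ℍ[ℝ]) : (c2 q).im = q.imK := rfl

lemma c1_mul (p q : ℍ[ℝ]) : c1 (p * q) = c1 p * c1 q - c2 p * conj (c2 q) := by
  apply Complex.ext <;> simp [Complex.mul_re, Complex.mul_im] <;> ring

lemma c2_mul (p q : ℍ[ℝ]) : c2 (p * q) = c1 p * c2 q + c2 p * conj (c1 q) := by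
  apply Complex.ext <;> simp [Complex.mul_re, Complex.mul_im] <;> ring

def c1Linear : ℍ[ℝ] →ₗ[ℝ] ℂ where
  toFun := c1
  map_add' p q := by apply Complex.ext <;> simp
  map_smul' r q := by apply Complex.ext <;> simp

def c2Linear : ℍ[ℝ] →ₗ[ℝ] ℂ where
  toFun := c2
  map_add' p q := by apply Complex.ext <;> simp
  map_smul' r q := by apply Complex.ext <;> simp

@[fun_prop] lemma continuous_c1 : Continuous c1 := c1Linear.continuous_of_finiteDimensional
@[fun_prop] lemma continuous_c2 : Continuous c2 := c2Linear.continuous_of_finiteDimensional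

end Quaternion

open Quaternion

lemma Matrix.map_c1_mul {l m o : Type*} [Fintype m] (A : Matrix l m ℍ[ℝ]) (B : Matrix m o ℍ[ℝ]) :
    (A * B).map c1 = A.map c1 * B.map c1 - A.map c2 * (B.map c2).map conj := by
  ext i j
  simp only [map_apply, mul_apply, sub_apply, ← Finset.sum_sub_distrib, ← c1_mul]
  exact map_sum c1Linear _ _

lemma Matrix.map_c2_mul {l m o : Type*} [Fintype m] (A : Matrix l m ℍ[ℝ]) (B : Matrix m o ℍ[ℝ]) :
    (A * B).map c2 = A.map c1 * B.map c2 + A.map c2 * (B.map c1).map conj := by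
  ext i j
  simp only [map_apply, mul_apply, add_apply, ← Finset.sum_add_distrib, ← c2_mul]
  exact map_sum c2Linear _ _

section ComplexMatrix

variable {m : Type*} [Fintype m] [DecidableEq m]

lemma Matrix.exists_aeval_eq_exp (N : Matrix m m ℂ) : ∃ p : ℂ[X], aeval N p = NormedSpace.exp N := by
  have hclosed : IsClosed (Algebra.adjoin ℂ {N} : Set (Matrix m m ℂ)) :=
    (Subalgebra.toSubmodule (Algebra.adjoin ℂ {N})).closed_of_finiteDimensional
  have := NormedSpace.exp_mem (R := ℂ) hclosed (Algebra.self_mem_adjoin_singleton ℂ N)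
  simpa [Algebra.adjoin_singleton_eq_range_aeval] using this

/- `NormedSpace.exp` does not depend on a norm; any normed-algebra structure on matrices lets us
use the Banach-algebra lemmas about it. -/
attribute [local instance] Matrix.linftyOpNormedRing Matrix.linftyOpNormedAlgebra

lemma Matrix.exp_mulVec_of_mulVec_eq_smul {N : Matrix m m ℂ} {z : ℂ} {v : m → ℂ}
    (hv : N *ᵥ v = z • v) : NormedSpace.exp N *ᵥ v = Complex.exp z • v := by
  have hpow (k : ℕ) : N ^ k *ᵥ v = z ^ k • v := by
    induction k with
    | zero => simp
    | succ k ih => rw [pow_succ, ← mulVec_mulVec, hv, mulVec_smul, ih, smul_smul, pow_succ']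
  have hN := (NormedSpace.exp_series_hasSum_exp' (𝕂 := ℂ) N).map (mulVec.addMonoidHomLeft v)
    (continuous_id.matrix_mulVec continuous_const)
  have hz := (NormedSpace.exp_series_hasSum_exp' (𝕂 := ℂ) z).smul_const v
  simp only [Function.comp_def, mulVec.addMonoidHomLeft, AddMonoidHom.coe_mk, ZeroHom.coe_mk,
    smul_mulVec, hpow, smul_smul] at hN
  rw [Complex.exp_eq_exp_ℂ]
  exact hN.unique (by simpa only [smul_eq_mul] using hz)

theorem Matrix.spectrum_exp (N : Matrix m m ℂ) :
    spectrum ℂ (NormedSpace.exp N) = Complex.exp '' spectrum ℂ N := by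
  refine subset_antisymm (fun w hw => ?_) ?_
  · obtain _ | _ := isEmpty_or_nonempty m
    · simp [spectrum.of_subsingleton] at hw
    -- `exp N = p(N)` for a polynomial `p`; on an eigenvector, `p(z) = e^z` for each eigenvalue `z`.
    obtain ⟨p, hp⟩ := N.exists_aeval_eq_exp
    rw [← hp, spectrum.map_polynomial_aeval_of_nonempty N p
      (spectrum.nonempty_of_isAlgClosed_of_finiteDimensional ℂ N)] at hw
    obtain ⟨z, hz, rfl⟩ := hw
    obtain ⟨v, hv⟩ := (Module.End.hasEigenvalue_iff_mem_spectrum.mpr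
      ((spectrum_toLin' N).symm ▸ hz)).exists_hasEigenvector
    have hNv : N *ᵥ v = z • v := by
      rw [← toLin'_apply]; exact Module.End.mem_eigenspace_iff.mp hv.1
    have hpv : aeval N p *ᵥ v = p.eval z • v := by
      rw [← toLinAlgEquiv'_apply, ← aeval_algHom_apply]
      exact Module.End.aeval_apply_of_hasEigenvector hv
    refine ⟨z, hz, smul_left_injective ℂ hv.2 ?_⟩
    show Complex.exp z • v = p.eval z • v
    rw [← exp_mulVec_of_mulVec_eq_smul hNv, ← hp, hpv]
  · rintro _ ⟨z, hz, rfl⟩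
    rw [Complex.exp_eq_exp_ℂ]
    exact spectrum.exp_mem_exp N hz

end ComplexMatrix

section ComplexAdjoint

variable {n : ℕ}

lemma chiMat_mul (A B : Matrix (Fin n) (Fin n) ℍ[ℝ]) : chiMat (A * B) = chiMat A * chiMat B := by
  have conj_conj_mapMatrix : ∀ X : Matrix (Fin n) (Fin n) ℂ,
      (starRingEnd ℂ).mapMatrix ((starRingEnd ℂ).mapMatrix X) = X := fun X => by ext; simp
  simp only [chiMat, fromBlocks_multiply, map_c1_mul, map_c2_mul, ← RingHom.mapMatrix_apply,
    map_mul, map_add, map_sub, map_neg, conj_conj_mapMatrix, fromBlocks_inj]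
  refine ⟨?_, ?_, ?_, ?_⟩ <;> noncomm_ring

lemma chiMat_add (A B : Matrix (Fin n) (Fin n) ℍ[ℝ]) : chiMat (A + B) = chiMat A + chiMat B := by
  ext (i | i) (j | j) <;> apply Complex.ext <;> simp [chiMat] <;> ring

lemma chiMat_algebraMap (r : ℝ) :
    chiMat (algebraMap ℝ (Matrix (Fin n) (Fin n) ℍ[ℝ]) r) = algebraMap ℝ _ r := by
  ext (i | i) (j | j) <;> apply Complex.ext <;>
    by_cases h : i = j <;> simp [chiMat, algebraMap_matrix_apply, h]

def chiAlgHom : Matrix (Fin n) (Fin n) ℍ[ℝ] →ₐ[ℝ] Matrix (Fin n ⊕ Fin n) (Fin n ⊕ Fin n) ℂ where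
  toFun := chiMat
  map_one' := by simpa using chiMat_algebraMap (n := n) 1
  map_mul' := chiMat_mul
  map_zero' := by simpa using chiMat_algebraMap (n := n) 0
  map_add' := chiMat_add
  commutes' := chiMat_algebraMap

lemma continuous_chiMat : Continuous (chiMat (n := n)) := by
  unfold chiMat; fun_prop

section MatrixNorm

attribute [local instance] Matrix.linftyOpNormedRing Matrix.linftyOpNormedAlgebra

lemma chiMat_exp (X : Matrix (Fin n) (Fin n) ℍ[ℝ]) :
    chiMat (NormedSpace.exp X) = NormedSpace.exp (chiMat X) :=
  NormedSpace.map_exp_of_mem_ball (𝕂 := ℝ) (chiAlgHom (n := n)) continuous_chiMat X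
    ((NormedSpace.expSeries_radius_eq_top ℝ (Matrix (Fin n) (Fin n) ℍ[ℝ])).symm ▸ edist_lt_top _ _)

end MatrixNorm

lemma spectrum_chiMat_exp_smul (B : Matrix (Fin n) (Fin n) ℍ[ℝ]) {T : ℝ} (hT : T ≠ 0) :
    spectrum ℂ (chiMat (NormedSpace.exp (T • B))) =
      (fun z => Complex.exp (z * T)) '' spectrum ℂ (chiMat B) := by
  have hsmul : chiMat (T • B) = (Units.mk0 (T : ℂ) (by exact_mod_cast hT)) • chiMat B := by
    rw [Units.smul_mk0, Complex.coe_smul]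
    exact map_smul (chiAlgHom (n := n)) T B
  rw [chiMat_exp, hsmul, Matrix.spectrum_exp, spectrum.unit_smul_eq_smul, ← Set.image_smul,
    Set.image_image]
  simp [mul_comm]

lemma chiMat_map_conj (X : Matrix (Fin n) (Fin n) ℍ[ℝ]) :
    (chiMat X).map conj = fromBlocks 0 1 (-1) 0 * chiMat X * fromBlocks 0 (-1) 1 0 := by
  ext (i | i) (j | j) <;> simp [chiMat, fromBlocks_multiply]

lemma charpoly_chiMat_map_conj (X : Matrix (Fin n) (Fin n) ℍ[ℝ]) :
    (chiMat X).charpoly.map (starRingEnd ℂ) = (chiMat X).charpoly := by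
  have hJ : (fromBlocks 0 (-1) 1 0 : Matrix (Fin n ⊕ Fin n) (Fin n ⊕ Fin n) ℂ) *
      fromBlocks 0 1 (-1) 0 = 1 := by
    simp [fromBlocks_multiply, fromBlocks_one]
  rw [← charpoly_map, chiMat_map_conj, charpoly_mul_comm, ← mul_assoc, hJ, one_mul]

lemma isRoot_charpoly_chiMat_conj {X : Matrix (Fin n) (Fin n) ℍ[ℝ]} {z : ℂ}
    (hz : (chiMat X).charpoly.IsRoot z) : (chiMat X).charpoly.IsRoot (conj z) := by
  simpa only [charpoly_chiMat_map_conj] using hz.map (f := starRingEnd ℂ)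

lemma isStdEigenvalue_or_conj {X : Matrix (Fin n) (Fin n) ℍ[ℝ]} {z : ℂ}
    (hz : z ∈ spectrum ℂ (chiMat X)) : IsStdEigenvalue X z ∨ IsStdEigenvalue X (conj z) := by
  rw [mem_spectrum_iff_isRoot_charpoly] at hz
  rcases le_or_gt 0 z.im with him | him
  · exact .inl ⟨hz, him⟩
  · exact .inr ⟨isRoot_charpoly_chiMat_conj hz, by simpa using him.le⟩

end ComplexAdjoint

lemma Complex.re_eq_of_exp_mul_ofReal_eq {T : ℝ} (hT : T ≠ 0) {a b : ℂ}
    (h : Complex.exp (a * T) = Complex.exp (b * T)) : a.re = b.re := by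
  have := congrArg (‖·‖) h
  simpa [Complex.norm_exp, hT] using this

theorem stmt11_general {n : ℕ} (T : ℝ) (hT : 0 < T)
    (B : Matrix (Fin n) (Fin n) ℍ[ℝ]) :
    (∀ μ : ℂ, IsStdEigenvalue B μ →
      IsStdEigenvalue (NormedSpace.exp (T • B)) (Complex.exp (μ * (T : ℂ))) ∨
      IsStdEigenvalue (NormedSpace.exp (T • B)) (Complex.exp (starRingEnd ℂ μ * (T : ℂ)))) ∧
    (∀ μ : ℂ, IsStdEigenvalue (NormedSpace.exp (T • B)) (Complex.exp (μ * (T : ℂ))) →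
      ∃ μk : ℂ, IsStdEigenvalue B μk ∧
        (Complex.exp (μ * (T : ℂ)) = Complex.exp (μk * (T : ℂ)) ∨
          Complex.exp (μ * (T : ℂ)) = Complex.exp (starRingEnd ℂ μk * (T : ℂ))) ∧
        μ.re = μk.re) := by
  have hspec := spectrum_chiMat_exp_smul B hT.ne'
  refine ⟨fun μ hμ => ?_, fun μ hμ => ?_⟩
  · have hexp : Complex.exp (μ * T) ∈ spectrum ℂ (chiMat (NormedSpace.exp (T • B))) :=
      hspec ▸ ⟨μ, mem_spectrum_iff_isRoot_charpoly.mpr hμ.1, rfl⟩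
    simpa [← Complex.exp_conj] using isStdEigenvalue_or_conj hexp
  · obtain ⟨l, hl, hexp⟩ : Complex.exp (μ * T) ∈ _ :=
      hspec ▸ mem_spectrum_iff_isRoot_charpoly.mpr hμ.1
    rcases isStdEigenvalue_or_conj hl with hstd | hstd
    · exact ⟨l, hstd, .inl hexp.symm, Complex.re_eq_of_exp_mul_ofReal_eq hT.ne' hexp.symm⟩
    · refine ⟨conj l, hstd, .inr (by simpa using hexp.symm), ?_⟩
      simpa using Complex.re_eq_of_exp_mul_ofReal_eq hT.ne' hexp.symm

/-- (i) for every standard eigenvalue `μ` of `B`, one of `e^{μT}`,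
`e^{conj(μ)T}` is a standard eigenvalue of `exp(TB)`; (ii) if `e^{μT}` is a standard
eigenvalue of `exp(TB)`, then some standard eigenvalue `μₖ` of `B` satisfies
`e^{μT} ∈ {e^{μₖT}, e^{conj(μₖ)T}}` and `Re μ = Re μₖ`. -/
theorem stmt11 {n : ℕ} (T : ℝ) (hT : 0 < T) (A M P : ℝ → Matrix (Fin n) (Fin n) ℍ[ℝ])
    (B : Matrix (Fin n) (Fin n) ℍ[ℝ]) (hA : Continuous A) (hAper : ∀ t, A (t + T) = A t)
    (hM : IsFundamental A M) (hP : ∀ t, P (t + T) = P t)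
    (hFloq : ∀ t, M t = P t * NormedSpace.exp (t • B))
    (hB : NormedSpace.exp (T • B) = Ring.inverse (M 0) * M T) :
    (∀ μ : ℂ, IsStdEigenvalue B μ →
      IsStdEigenvalue (NormedSpace.exp (T • B)) (Complex.exp (μ * (T : ℂ))) ∨
      IsStdEigenvalue (NormedSpace.exp (T • B)) (Complex.exp (starRingEnd ℂ μ * (T : ℂ)))) ∧
    (∀ μ : ℂ, IsStdEigenvalue (NormedSpace.exp (T • B)) (Complex.exp (μ * (T : ℂ))) →
      ∃ μk : ℂ, IsStdEigenvalue B μk ∧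
        (Complex.exp (μ * (T : ℂ)) = Complex.exp (μk * (T : ℂ)) ∨
          Complex.exp (μ * (T : ℂ)) = Complex.exp (starRingEnd ℂ μk * (T : ℂ))) ∧
        μ.re = μk.re) :=
  stmt11_general T hT B
end
end

section
/- Let T > 0, let A : ℝ → ℍ^{n×n} be continuous with A(t+T) = A(t), and let M be the principal fundamental matrix of ẋ = A(t)x with M(0) = I. Suppose μ ∈ ℂ and p : ℝ → ℍ^n satisfies p(t+T) = p(t) for all t, p is not identically zero, and x(t) := p(t)·e^{μt} (right multiplication by the quaternion e^{μt}, viewing ℂ ⊆ ℍ) is a solution of ẋ = A(t)x. Then e^{μT} or e^{conj(μ)T} is a standard eigenvalue of the monodromy matrix M(T), i.e. one of μ, conj(μ) is a characteristic exponent. -/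
open Matrix Polynomial
open scoped Quaternion

noncomputable section

open Set

/-! By uniqueness for the linear system, the solution `p(t) e^{μt}` coincides with `M(t) p(0)`;
at `t = T` periodicity gives `M(T) p(0) = p(0) e^{μT}`, and `p(0) ≠ 0` because a solution
vanishing at one time vanishes identically. So `p(0)` is a right eigenvector of `M(T)` for the
complex value `e^{μT}`, and its complex adjoint column is an eigenvector of `χ_{M(T)}`. -/

namespace Quaternion

def j : ℍ[ℝ] := ⟨0, 0, 1, 0⟩

lemma j_ne_zero : j ≠ 0 := fun h => by simpa [j] using congrArg QuaternionAlgebra.imJ h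

lemma ext_c1_c2 {a b : ℍ[ℝ]} (h1 : a.c1 = b.c1) (h2 : a.c2 = b.c2) : a = b := by
  simp only [c1, c2, Complex.mk.injEq] at h1 h2
  ext <;> simp [h1, h2]

lemma c1_mul_s17 (a b : ℍ[ℝ]) : (a * b).c1 = a.c1 * b.c1 - a.c2 * starRingEnd ℂ b.c2 := by
  apply Complex.ext <;> simp [c1, c2] <;> ring

lemma c2_mul_s17 (a b : ℍ[ℝ]) : (a * b).c2 = a.c1 * b.c2 + a.c2 * starRingEnd ℂ b.c1 := by
  apply Complex.ext <;> simp [c1, c2] <;> ring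

lemma c1_sum {ι : Type*} (s : Finset ι) (f : ι → ℍ[ℝ]) :
    (∑ i ∈ s, f i).c1 = ∑ i ∈ s, (f i).c1 :=
  map_sum (AddMonoidHom.mk' c1 fun _ _ => rfl) f s

lemma c2_sum {ι : Type*} (s : Finset ι) (f : ι → ℍ[ℝ]) :
    (∑ i ∈ s, f i).c2 = ∑ i ∈ s, (f i).c2 :=
  map_sum (AddMonoidHom.mk' c2 fun _ _ => rfl) f s

@[simp] lemma c1_toQuat (z : ℂ) : z.toQuat.c1 = z := rfl

@[simp] lemma c2_toQuat (z : ℂ) : z.toQuat.c2 = 0 := rfl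

lemma c1_mul_toQuat (a : ℍ[ℝ]) (z : ℂ) : (a * z.toQuat).c1 = a.c1 * z := by
  simp [c1_mul_s17]

lemma c2_mul_toQuat (a : ℍ[ℝ]) (z : ℂ) : (a * z.toQuat).c2 = a.c2 * starRingEnd ℂ z := by
  simp [c2_mul_s17]

end Quaternion

namespace Complex

lemma toQuat_ne_zero {z : ℂ} (hz : z ≠ 0) : z.toQuat ≠ 0 :=
  fun h => hz (Complex.ext (congrArg QuaternionAlgebra.re h) (congrArg QuaternionAlgebra.imI h))

@[simp] lemma toQuat_one : (1 : ℂ).toQuat = 1 := by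
  ext <;> simp [toQuat]

lemma toQuat_mul_j (z : ℂ) :
    z.toQuat * Quaternion.j = Quaternion.j * (starRingEnd ℂ z).toQuat := by
  ext <;>
    simp only [Quaternion.re_mul, Quaternion.imI_mul, Quaternion.imJ_mul, Quaternion.imK_mul] <;>
    simp [toQuat, Quaternion.j]

end Complex

section ComplexAdjoint

variable {n : ℕ}

/-- The first column of the complex adjoint of `q`, viewed as an `n × 1` quaternion matrix. -/
def chiVec (q : Fin n → ℍ[ℝ]) : Fin n ⊕ Fin n → ℂ :=
  Sum.elim (fun i => (q i).c1) (fun i => -starRingEnd ℂ (q i).c2)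

lemma chiVec_ne_zero {q : Fin n → ℍ[ℝ]} (hq : q ≠ 0) : chiVec q ≠ 0 := by
  contrapose! hq
  funext i
  have h1 := congrFun hq (Sum.inl i)
  have h2 := congrFun hq (Sum.inr i)
  simp only [chiVec, Sum.elim_inl, Sum.elim_inr, Pi.zero_apply, neg_eq_zero, map_eq_zero] at h1 h2
  exact Quaternion.ext_c1_c2 h1 h2

lemma chiVec_mul_toQuat (q : Fin n → ℍ[ℝ]) (z : ℂ) :
    chiVec (fun k => q k * z.toQuat) = z • chiVec q := by
  funext i
  cases i <;>
    simp [chiVec, Quaternion.c1_mul_toQuat, Quaternion.c2_mul_toQuat, mul_comm]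

lemma chiMat_mulVec_chiVec (B : Matrix (Fin n) (Fin n) ℍ[ℝ]) (q : Fin n → ℍ[ℝ]) :
    chiMat B *ᵥ chiVec q = chiVec (B *ᵥ q) := by
  funext i
  cases i <;>
    simp [chiMat, chiVec, mulVec, dotProduct, Quaternion.c1_sum, Quaternion.c2_sum,
      Quaternion.c1_mul_s17, Quaternion.c2_mul_s17, Fintype.sum_sum_type, sub_eq_add_neg,
      Finset.sum_add_distrib]

lemma isRoot_charpoly_of_mulVec_eq_smul {m : Type*} [Fintype m] [DecidableEq m]
    {B : Matrix m m ℂ} {v : m → ℂ} {z : ℂ} (hv : v ≠ 0) (h : B *ᵥ v = z • v) :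
    B.charpoly.IsRoot z := by
  rw [← Matrix.charpoly_toLin', ← Module.End.hasEigenvalue_iff_isRoot_charpoly]
  exact Module.End.hasEigenvalue_of_hasEigenvector ⟨Module.End.mem_eigenspace_iff.2 h, hv⟩

lemma isRoot_charpoly_chiMat_of_mulVec_eq {B : Matrix (Fin n) (Fin n) ℍ[ℝ]} {q : Fin n → ℍ[ℝ]}
    {z : ℂ} (hq : q ≠ 0) (h : B *ᵥ q = fun k => q k * z.toQuat) :
    (chiMat B).charpoly.IsRoot z :=
  isRoot_charpoly_of_mulVec_eq_smul (chiVec_ne_zero hq) <| by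
    rw [chiMat_mulVec_chiVec, h, chiVec_mul_toQuat]

lemma mulVec_mul_right (B : Matrix (Fin n) (Fin n) ℍ[ℝ]) (q : Fin n → ℍ[ℝ]) (c : ℍ[ℝ]) :
    B *ᵥ (fun k => q k * c) = fun k => (B *ᵥ q) k * c := by
  funext i
  simp [mulVec, dotProduct, Finset.sum_mul, mul_assoc]

/-- Right eigenvectors for `z` and `z̄` come in pairs `q`, `q j`, because `z j = j z̄`. -/
lemma isStdEigenvalue_or_conj_of_mulVec_eq {B : Matrix (Fin n) (Fin n) ℍ[ℝ]}
    {q : Fin n → ℍ[ℝ]} {z : ℂ} (hq : q ≠ 0) (h : B *ᵥ q = fun k => q k * z.toQuat) :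
    IsStdEigenvalue B z ∨ IsStdEigenvalue B (starRingEnd ℂ z) := by
  have hqj : (fun k => q k * Quaternion.j) ≠ 0 := fun h0 =>
    hq <| funext fun k => by
      simpa [Quaternion.j_ne_zero] using congrFun h0 k
  have hconj : B *ᵥ (fun k => q k * Quaternion.j) =
      fun k => q k * Quaternion.j * (starRingEnd ℂ z).toQuat := by
    rw [mulVec_mul_right, h]
    simp only [mul_assoc, Complex.toQuat_mul_j]
  rcases le_total 0 z.im with him | him
  · exact Or.inl ⟨isRoot_charpoly_chiMat_of_mulVec_eq hq h, him⟩
  · exact Or.inr ⟨isRoot_charpoly_chiMat_of_mulVec_eq hqj hconj, by simpa using him⟩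

end ComplexAdjoint

section LinearSystem

variable {n : ℕ}

lemma norm_mulVec_le (B : Matrix (Fin n) (Fin n) ℍ[ℝ]) (v : Fin n → ℍ[ℝ]) :
    ‖B *ᵥ v‖ ≤ matNorm B * ‖v‖ := by
  have hnonneg : 0 ≤ matNorm B * ‖v‖ := by unfold matNorm; positivity
  refine (pi_norm_le_iff_of_nonneg hnonneg).2 fun i => ?_
  calc ‖(B *ᵥ v) i‖ ≤ ∑ j, ‖B i j‖ * ‖v‖ := by
        refine (norm_sum_le Finset.univ fun j => B i j * v j).trans
          (Finset.sum_le_sum fun j _ => ?_)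
        rw [norm_mul]
        gcongr
        exact norm_le_pi_norm v j
    _ = (∑ j, ‖B i j‖) * ‖v‖ := (Finset.sum_mul ..).symm
    _ ≤ matNorm B * ‖v‖ := by
        gcongr
        exact Finset.single_le_sum (f := fun i => ∑ j, ‖B i j‖) (fun i _ => by positivity)
          (Finset.mem_univ i)

lemma lipschitzWith_mulVec (B : Matrix (Fin n) (Fin n) ℍ[ℝ]) :
    LipschitzWith (matNorm B).toNNReal (B *ᵥ ·) :=
  LipschitzWith.of_dist_le' fun u v => by
    simpa only [dist_eq_norm, ← mulVec_sub] using norm_mulVec_le B (u - v)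

lemma continuous_matNorm : Continuous (matNorm : Matrix (Fin n) (Fin n) ℍ[ℝ] → ℝ) := by
  unfold matNorm
  fun_prop

/-- Uniqueness for `ẋ = A(t)x`: on each bounded interval `x ↦ A(t)x` is uniformly Lipschitz. -/
lemma IsSol.unique {A : ℝ → Matrix (Fin n) (Fin n) ℍ[ℝ]} (hA : Continuous A)
    {x y : ℝ → Fin n → ℍ[ℝ]} (hx : IsSol A x) (hy : IsSol A y) {t₀ : ℝ} (h : x t₀ = y t₀) :
    x = y := by
  funext t
  obtain ⟨a, b, ht, ht₀⟩ : ∃ a b, t ∈ Ioo a b ∧ t₀ ∈ Ioo a b :=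
    ⟨min t t₀ - 1, max t t₀ + 1, by grind⟩
  obtain ⟨C, hC⟩ :=
    (isCompact_Icc (a := a) (b := b)).exists_bound_of_continuousOn
      (continuous_matNorm.comp hA).continuousOn
  have hlip : ∀ s ∈ Ioo a b, LipschitzOnWith C.toNNReal (A s *ᵥ ·) univ := fun s hs =>
    ((lipschitzWith_mulVec (A s)).weaken (Real.toNNReal_le_toNNReal
      ((Real.le_norm_self _).trans (hC s (Ioo_subset_Icc_self hs))))).lipschitzOnWith
  exact ODE_solution_unique_of_mem_Ioo hlip ht₀ (fun s _ => ⟨hx s, trivial⟩)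
    (fun s _ => ⟨hy s, trivial⟩) h ht

lemma IsFundamental.isSol_mulVec {A M : ℝ → Matrix (Fin n) (Fin n) ℍ[ℝ]}
    (hM : IsFundamental A M) (v : Fin n → ℍ[ℝ]) : IsSol A (fun t => M t *ᵥ v) := by
  intro t
  simp only [mulVec_mulVec]
  refine hasDerivAt_pi.2 fun i => ?_
  simpa [mulVec, dotProduct] using HasDerivAt.fun_sum fun j _ => (hM.1 t i j).mul_const (v j)

end LinearSystem

theorem stmt17_general {n : ℕ} (T : ℝ) (A M : ℝ → Matrix (Fin n) (Fin n) ℍ[ℝ])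
    (hA : Continuous A) (hM : IsFundamental A M)
    (hM0 : M 0 = 1) (μ : ℂ) (p : ℝ → Fin n → ℍ[ℝ]) (hp : p ≠ 0)
    (hper : ∀ t, p (t + T) = p t)
    (hsol : IsSol A (fun t k => p t k * Complex.toQuat (Complex.exp (μ * (t : ℂ))))) :
    IsStdEigenvalue (M T) (Complex.exp (μ * (T : ℂ))) ∨
    IsStdEigenvalue (M T) (Complex.exp (starRingEnd ℂ μ * (T : ℂ))) := by
  have hx : (fun t k => p t k * (Complex.exp (μ * t)).toQuat) = fun t => M t *ᵥ p 0 :=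
    hsol.unique hA (hM.isSol_mulVec (p 0)) (t₀ := 0) (by simp [hM0])
  have hp0 : p 0 ≠ 0 := by
    refine fun h0 => hp (funext fun t => funext fun k => ?_)
    have hxt := congrFun (congrFun hx t) k
    simp only [h0, mulVec_zero, Pi.zero_apply, mul_eq_zero] at hxt
    exact hxt.resolve_right (Complex.toQuat_ne_zero (Complex.exp_ne_zero _))
  have hmonodromy : M T *ᵥ p 0 = fun k => p 0 k * (Complex.exp (μ * T)).toQuat := by
    have hpT : p T = p 0 := by simpa using hper 0
    rw [← congrFun hx T, hpT]
  simpa [← Complex.exp_conj] using isStdEigenvalue_or_conj_of_mulVec_eq hp0 hmonodromy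

/-- if `x(t) = p(t)·e^{μt}` is a nontrivial solution with `p` `T`-periodic,
then `e^{μT}` or `e^{conj(μ)T}` is a standard eigenvalue of the monodromy matrix `M(T)`. -/
theorem stmt17 {n : ℕ} (T : ℝ) (hT : 0 < T) (A M : ℝ → Matrix (Fin n) (Fin n) ℍ[ℝ])
    (hA : Continuous A) (hAper : ∀ t, A (t + T) = A t) (hM : IsFundamental A M)
    (hM0 : M 0 = 1) (μ : ℂ) (p : ℝ → Fin n → ℍ[ℝ]) (hp : p ≠ 0)
    (hper : ∀ t, p (t + T) = p t)
    (hsol : IsSol A (fun t k => p t k * Complex.toQuat (Complex.exp (μ * (t : ℂ))))) :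
    IsStdEigenvalue (M T) (Complex.exp (μ * (T : ℂ))) ∨
    IsStdEigenvalue (M T) (Complex.exp (starRingEnd ℂ μ * (T : ℂ))) :=
  stmt17_general T A M hA hM hM0 μ p hp hper hsol
end
end
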